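/- For every integer n ≥ 1 and every integer N ≥ 0, the tail of the series satisfies 0 < (−1)^N (Σ_{m=0}^∞ c_m / n^{m/2} − Σ_{m=0}^{N−1} c_m / n^{m/2}) < (−1)^N c_N / n^{N/2}; equivalently, the full sum differs from the N-term partial sum by θ · c_N / n^{N/2} for some θ strictly between 0 and 1. -/

import Mathlib

/-! Write `c m = (-1) ^ m * cSum m / (4 * √6) ^ m`, where `cSum m > 0` is the binomial sum; the
series is then alternating with terms `t m = cSum m / (4 * √6 * √n) ^ m`. Comparing the terms of
consecutive binomial sums gives `cSum (m + 1) ≤ (π / 2 + 12 / π) * cSum m`, the `12 / π` coming from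
the extra top term when `m` is even. As `π / 2 + 12 / π < 4 * √6`, the `t m` decrease strictly and
geometrically, and for such a sequence the tail `∑_{i ≥ N} (-1) ^ (i - N) * t i` lies strictly
between `0` and `t N`: group its terms in pairs. -/

open Real Finset Filter Topology

noncomputable def c (m : ℕ) : ℝ :=
  ((-1 : ℝ) ^ m / (4 * Real.sqrt 6) ^ m) *
    ∑ k ∈ Finset.range ((m + 1) / 2 + 1),
      ((m + 1).choose k : ℝ) * ((m + 1 - k : ℕ) : ℝ) / ((m + 1 - 2 * k).factorial : ℝ) *
        (π / 6) ^ ((m : ℤ) - 2 * k)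

section Alternating

variable {t : ℕ → ℝ}

theorem Summable.comp_two_mul (ht : Summable t) : Summable fun k ↦ t (2 * k) :=
  ht.comp_injective (mul_right_injective₀ two_ne_zero)

theorem Summable.comp_two_mul_add_one (ht : Summable t) : Summable fun k ↦ t (2 * k + 1) :=
  ht.comp_injective fun a b h ↦ by simpa using h

theorem Summable.hasSum_neg_one_pow_mul (ht : Summable t) :
    HasSum (fun m ↦ (-1 : ℝ) ^ m * t m) (∑' k, t (2 * k) - ∑' k, t (2 * k + 1)) := by
  refine HasSum.even_add_odd ?_ ?_
  · simpa [pow_mul] using ht.comp_two_mul.hasSum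
  · simpa [pow_succ, pow_mul] using ht.comp_two_mul_add_one.hasSum.neg

theorem tsum_neg_one_pow_mul_pos (ht : Summable t) (hdec : ∀ m, t (m + 1) < t m) :
    0 < ∑' m, (-1 : ℝ) ^ m * t m := by
  rw [ht.hasSum_neg_one_pow_mul.tsum_eq, sub_pos]
  exact Summable.tsum_lt_tsum (i := 0) (fun k ↦ (hdec _).le) (hdec _) ht.comp_two_mul_add_one
    ht.comp_two_mul

theorem tsum_neg_one_pow_mul_lt (ht : Summable t) (hdec : ∀ m, t (m + 1) < t m) :
    ∑' m, (-1 : ℝ) ^ m * t m < t 0 := by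
  have hodd : ∑' k, t (2 * (k + 1)) < ∑' k, t (2 * k + 1) :=
    Summable.tsum_lt_tsum (i := 0) (fun k ↦ (hdec _).le) (hdec _)
      ((summable_nat_add_iff 1).2 ht.comp_two_mul) ht.comp_two_mul_add_one
  rw [ht.hasSum_neg_one_pow_mul.tsum_eq, ht.comp_two_mul.tsum_eq_zero_add, mul_zero]
  linarith

theorem neg_one_pow_mul_tsum_sub_sum (ht : Summable t) (N : ℕ) :
    (-1 : ℝ) ^ N * (∑' m, (-1) ^ m * t m - ∑ m ∈ range N, (-1) ^ m * t m) =
      ∑' i, (-1) ^ i * t (i + N) := by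
  rw [← ht.hasSum_neg_one_pow_mul.summable.sum_add_tsum_nat_add N, add_sub_cancel_left,
    ← tsum_mul_left]
  congr 1; ext i
  rw [← mul_assoc, ← pow_add, add_comm i N, ← add_assoc, ← two_mul, pow_add, pow_mul]
  simp

theorem alternating_tail_bounds (ht : Summable t) (hdec : ∀ m, t (m + 1) < t m) (N : ℕ) :
    0 < (-1 : ℝ) ^ N * (∑' m, (-1) ^ m * t m - ∑ m ∈ range N, (-1) ^ m * t m) ∧
      (-1 : ℝ) ^ N * (∑' m, (-1) ^ m * t m - ∑ m ∈ range N, (-1) ^ m * t m) < t N := by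
  have htail : Summable fun i ↦ t (i + N) := (summable_nat_add_iff N).2 ht
  have hdec' : ∀ i, t (i + 1 + N) < t (i + N) := fun i ↦ by
    simpa only [add_right_comm] using hdec (i + N)
  rw [neg_one_pow_mul_tsum_sub_sum ht]
  exact ⟨tsum_neg_one_pow_mul_pos htail hdec',
    by simpa using tsum_neg_one_pow_mul_lt htail hdec'⟩

end Alternating

noncomputable def cTerm (m k : ℕ) : ℝ :=
  ((m + 1).choose k : ℝ) * ((m + 1 - k : ℕ) : ℝ) / ((m + 1 - 2 * k).factorial : ℝ) *
    (π / 6) ^ ((m : ℤ) - 2 * k)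

noncomputable def cSum (m : ℕ) : ℝ := ∑ k ∈ range ((m + 1) / 2 + 1), cTerm m k

theorem c_eq (m : ℕ) : c m = (-1) ^ m / (4 * √6) ^ m * cSum m := rfl

theorem cTerm_nonneg (m k : ℕ) : 0 ≤ cTerm m k := by
  unfold cTerm; positivity

theorem cSum_pos (m : ℕ) : 0 < cSum m := by
  refine sum_pos' (fun k _ ↦ cTerm_nonneg m k) ⟨0, by simp, ?_⟩
  simp only [cTerm, Nat.choose_zero_right, Nat.sub_zero, mul_zero]
  positivity

theorem cTerm_succ_mul (m k r : ℕ) (hr : m + 1 = 2 * k + r) :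
    cTerm (m + 1) k * ((k + r) * (r + 1)) = π / 6 * (2 * k + r + 1) * cTerm m k := by
  have hchoose : ((m + 1).choose k * (m + 2) : ℝ) = (m + 1 + 1).choose k * (k + r + 1) := by
    exact_mod_cast (Nat.choose_mul_succ_eq (m + 1) k).trans (by congr 1; omega)
  have hexp : ((m + 1 : ℕ) : ℤ) - 2 * k = 1 + ((m : ℤ) - 2 * k) := by push_cast; ring
  have hm : (m : ℝ) + 1 = 2 * k + r := by exact_mod_cast hr
  unfold cTerm
  rw [hexp, zpow_add₀ (by positivity), zpow_one, show m + 1 + 1 - k = k + r + 1 by omega,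
    show m + 1 + 1 - 2 * k = r + 1 by omega, show m + 1 - k = k + r by omega,
    show m + 1 - 2 * k = r by omega, Nat.factorial_succ]
  push_cast
  field_simp
  linear_combination ((k : ℝ) + r) * (((m + 1).choose k : ℝ) * hm - hchoose)

theorem cTerm_succ_le (m k : ℕ) (hk : 2 * k ≤ m + 1) :
    cTerm (m + 1) k ≤ π / 2 * cTerm m k := by
  obtain ⟨r, hr⟩ : ∃ r, m + 1 = 2 * k + r := ⟨m + 1 - 2 * k, by omega⟩
  have hkr : (1 : ℝ) ≤ k + r := by exact_mod_cast (show 1 ≤ k + r by omega)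
  have hr0 : (0 : ℝ) ≤ r := r.cast_nonneg
  have hpos : (0 : ℝ) < (k + r) * (r + 1) := by positivity
  have hcount : (2 * k + r + 1 : ℝ) ≤ 3 * ((k + r) * (r + 1)) := by nlinarith
  refine le_of_mul_le_mul_right ?_ hpos
  calc cTerm (m + 1) k * ((k + r) * (r + 1)) = π / 6 * (2 * k + r + 1) * cTerm m k :=
        cTerm_succ_mul m k r hr
    _ ≤ π / 6 * (3 * ((k + r) * (r + 1))) * cTerm m k := by
        gcongr
        · exact cTerm_nonneg m k
    _ = π / 2 * cTerm m k * ((k + r) * (r + 1)) := by ring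

theorem cTerm_two_mul_add_one_succ (p : ℕ) :
    cTerm (2 * p + 1) (p + 1) = 12 / π * cTerm (2 * p) p := by
  have hchoose : ((2 * p + 2).choose (p + 1) : ℝ) = 2 * (2 * p + 1).choose p := by
    rw [Nat.choose_succ_succ, ← Nat.choose_symm_half]; push_cast; ring
  have hexp₁ : ((2 * p + 1 : ℕ) : ℤ) - 2 * (p + 1 : ℕ) = -1 := by push_cast; ring
  have hexp₀ : ((2 * p : ℕ) : ℤ) - 2 * (p : ℕ) = 0 := by push_cast; ring
  unfold cTerm
  rw [hexp₁, hexp₀, show 2 * p + 1 + 1 - (p + 1) = p + 1 by omega,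
    show 2 * p + 1 + 1 - 2 * (p + 1) = 0 by omega, show 2 * p + 1 - p = p + 1 by omega,
    show 2 * p + 1 - 2 * p = 1 by omega, hchoose]
  field_simp
  ring

theorem sum_cTerm_succ_le (m : ℕ) :
    ∑ k ∈ range ((m + 1) / 2 + 1), cTerm (m + 1) k ≤ π / 2 * cSum m := by
  rw [cSum, mul_sum]
  exact sum_le_sum fun k hk ↦ cTerm_succ_le m k (by rw [mem_range] at hk; omega)

theorem cSum_succ_le (m : ℕ) : cSum (m + 1) ≤ (π / 2 + 12 / π) * cSum m := by
  have hmain := sum_cTerm_succ_le m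
  have hextra : 0 ≤ 12 / π * cSum m := by have := cSum_pos m; positivity
  rcases Nat.even_or_odd' m with ⟨p, rfl | rfl⟩
  · have htop : cTerm (2 * p) p ≤ cSum (2 * p) :=
      single_le_sum (f := cTerm (2 * p)) (fun k _ ↦ cTerm_nonneg _ k)
        (mem_range.2 (show p < (2 * p + 1) / 2 + 1 by omega))
    have hsplit : cSum (2 * p + 1) =
        ∑ k ∈ range ((2 * p + 1) / 2 + 1), cTerm (2 * p + 1) k + cTerm (2 * p + 1) (p + 1) := by
      rw [cSum, show (2 * p + 1 + 1) / 2 + 1 = (2 * p + 1) / 2 + 1 + 1 by omega, sum_range_succ,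
        show (2 * p + 1) / 2 + 1 = p + 1 by omega]
    rw [hsplit, cTerm_two_mul_add_one_succ]
    have := mul_le_mul_of_nonneg_left htop (by positivity : (0 : ℝ) ≤ 12 / π)
    linarith
  · rw [cSum, show (2 * p + 1 + 1 + 1) / 2 + 1 = (2 * p + 1 + 1) / 2 + 1 by omega]
    linarith

theorem pi_div_two_add_twelve_div_pi_lt : π / 2 + 12 / π < 4 * √6 := by
  have h12 : 12 / π < 4 := by rw [div_lt_iff₀ pi_pos]; linarith [pi_gt_three]
  have h6 : 2 ≤ √6 := le_sqrt_of_sq_le (by norm_num)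
  linarith [pi_lt_four]

section Series

variable {D : ℝ}

theorem pi_div_two_add_twelve_div_pi_div_lt_one (hD : 4 * √6 ≤ D) :
    (π / 2 + 12 / π) / D < 1 :=
  (div_lt_one ((by positivity : (0 : ℝ) < 4 * √6).trans_le hD)).2
    (pi_div_two_add_twelve_div_pi_lt.trans_le hD)

theorem cSum_div_pow_succ_le (hD : 0 < D) (m : ℕ) :
    cSum (m + 1) / D ^ (m + 1) ≤ (π / 2 + 12 / π) / D * (cSum m / D ^ m) := by
  calc cSum (m + 1) / D ^ (m + 1) ≤ (π / 2 + 12 / π) * cSum m / D ^ (m + 1) := by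
        gcongr; exact cSum_succ_le m
    _ = (π / 2 + 12 / π) / D * (cSum m / D ^ m) := by field_simp; ring

theorem cSum_div_pow_succ_lt (hD : 4 * √6 ≤ D) (m : ℕ) :
    cSum (m + 1) / D ^ (m + 1) < cSum m / D ^ m := by
  have hD0 : 0 < D := (by positivity : (0 : ℝ) < 4 * √6).trans_le hD
  have hpos : 0 < cSum m / D ^ m := by have := cSum_pos m; positivity
  calc _ ≤ (π / 2 + 12 / π) / D * (cSum m / D ^ m) := cSum_div_pow_succ_le hD0 m
    _ < cSum m / D ^ m := mul_lt_of_lt_one_left hpos (pi_div_two_add_twelve_div_pi_div_lt_one hD)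

theorem summable_cSum_div_pow (hD : 4 * √6 ≤ D) : Summable fun m ↦ cSum m / D ^ m := by
  have hD0 : 0 < D := (by positivity : (0 : ℝ) < 4 * √6).trans_le hD
  refine summable_of_ratio_norm_eventually_le (pi_div_two_add_twelve_div_pi_div_lt_one hD)
    (.of_forall fun m ↦ ?_)
  have hnonneg : ∀ m, 0 ≤ cSum m / D ^ m := fun m ↦ by have := cSum_pos m; positivity
  rw [Real.norm_of_nonneg (hnonneg _), Real.norm_of_nonneg (hnonneg _)]
  exact cSum_div_pow_succ_le hD0 m

end Series

theorem c_div_rpow_eq (n m : ℕ) :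
    c m / (n : ℝ) ^ ((m : ℝ) / 2) = (-1) ^ m * (cSum m / (4 * √6 * √n) ^ m) := by
  rw [c_eq, show (m : ℝ) / 2 = 1 / 2 * m by ring, rpow_mul n.cast_nonneg, ← sqrt_eq_rpow,
    rpow_natCast, mul_pow]
  ring

theorem stmt5 (n N : ℕ) (hn : 1 ≤ n) :
    0 < (-1 : ℝ) ^ N * ((∑' m : ℕ, c m / (n : ℝ) ^ ((m : ℝ) / 2)) -
        ∑ m ∈ Finset.range N, c m / (n : ℝ) ^ ((m : ℝ) / 2)) ∧
      (-1 : ℝ) ^ N * ((∑' m : ℕ, c m / (n : ℝ) ^ ((m : ℝ) / 2)) -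
        ∑ m ∈ Finset.range N, c m / (n : ℝ) ^ ((m : ℝ) / 2)) <
        (-1 : ℝ) ^ N * (c N / (n : ℝ) ^ ((N : ℝ) / 2)) := by
  have hD : 4 * √6 ≤ 4 * √6 * √n :=
    le_mul_of_one_le_right (by positivity) (one_le_sqrt.2 (by exact_mod_cast hn))
  have key := alternating_tail_bounds (summable_cSum_div_pow hD) (cSum_div_pow_succ_lt hD) N
  simp only [c_div_rpow_eq]
  rwa [← mul_assoc, ← pow_add, ← two_mul, pow_mul, neg_one_sq, one_pow, one_mul]
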